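/- arXiv:2009.11950 — 3 statements merged into one kernel-verified Lean document; each statement's English description precedes it below -/
import Mathlib

section
/- Let d ≥ 2, let G be a d-regular tree, let v₁ be a vertex and let v₂ be a vertex adjacent to v₁. For n ≥ 1, the number of closed walks of length 2n in G starting and ending at v₁ equals d times the number of walks of length 2n - 1 in G starting at v₁ and ending at v₂. -/
/-!
In a tree every vertex `u ≠ v` has exactly one neighbour closer to `v`, and all its other
neighbours are one step farther. Hence in a `d`-regular tree the number of walks of length `ℓ`
from `u` to `v` depends only on `ℓ` and `dist u v`, through a recursion on the first step. For
`u = v` every first step lands at distance `1`, which gives the factor `d`.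
-/

namespace SimpleGraph

variable {V : Type*} {G : SimpleGraph V}

/-- Number of walks of length `ℓ` between two vertices at distance `k` in a `d`-regular tree: the
first step of a walk goes to the unique neighbour closer to the target or to one of the `d - 1`
others, which are all farther. -/
def regularTreeWalkCount (d : ℕ) : ℕ → ℕ → ℕ
  | 0, 0 => 1
  | 0, _ + 1 => 0
  | ℓ + 1, 0 => d * regularTreeWalkCount d ℓ 1
  | ℓ + 1, k + 1 => regularTreeWalkCount d ℓ k + (d - 1) * regularTreeWalkCount d ℓ (k + 2)

def walkLengthSuccEquiv (G : SimpleGraph V) (u v : V) (ℓ : ℕ) :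
    {p : G.Walk u v // p.length = ℓ + 1} ≃
      Σ w : G.neighborSet u, {p : G.Walk w v // p.length = ℓ} where
  toFun
    | ⟨.cons h q, hq⟩ => ⟨⟨_, h⟩, q, Nat.succ_injective hq⟩
  invFun
    | ⟨⟨_, h⟩, q, hq⟩ => ⟨.cons h q, congrArg (· + 1) hq⟩
  left_inv
    | ⟨.cons _ _, _⟩ => rfl
  right_inv _ := rfl

theorem natCard_walk_length_succ [G.LocallyFinite] (u v : V) (ℓ : ℕ) :
    Nat.card {p : G.Walk u v // p.length = ℓ + 1} =
      ∑ w ∈ G.neighborFinset u, Nat.card {p : G.Walk w v // p.length = ℓ} := by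
  classical
  rw [Nat.card_congr (walkLengthSuccEquiv G u v ℓ), Nat.card_sigma, neighborFinset_def]
  exact Finset.sum_set_coe (f := fun w => Nat.card {p : G.Walk w v // p.length = ℓ}) _

theorem Reachable.exists_adj_dist_add_one_eq {u v : V} (h : G.Reachable u v) (hne : u ≠ v) :
    ∃ w, G.Adj u w ∧ G.dist w v + 1 = G.dist u v := by
  obtain ⟨p, hp⟩ := h.exists_walk_length_eq_dist
  cases p with
  | nil => exact absurd rfl hne
  | cons hadj q =>
    have hshort : G.dist _ v ≤ q.length := dist_le q
    have htriangle := hadj.reachable.dist_triangle_left v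
    rw [dist_eq_one_iff_adj.mpr hadj] at htriangle
    rw [Walk.length_cons] at hp
    exact ⟨_, hadj, by omega⟩

theorem IsAcyclic.eq_of_adj_of_dist_add_one_eq (hG : G.IsAcyclic) {u v w w' : V}
    (hw : G.Adj u w) (hw' : G.Adj u w') (hdist : G.dist w v + 1 = G.dist u v)
    (hdist' : G.dist w' v + 1 = G.dist u v) : w = w' := by
  have hreach : G.Reachable u v := Reachable.of_dist_ne_zero (by omega)
  obtain ⟨q, hq⟩ := (hw.reachable.symm.trans hreach).exists_walk_length_eq_dist
  obtain ⟨q', hq'⟩ := (hw'.reachable.symm.trans hreach).exists_walk_length_eq_dist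
  -- prepending the first step to a geodesic gives a geodesic, hence the unique path to `v`
  have hpath : (Walk.cons hw q).IsPath := Walk.isPath_of_length_eq_dist _ (by simp [hq, hdist])
  have hpath' : (Walk.cons hw' q').IsPath :=
    Walk.isPath_of_length_eq_dist _ (by simp [hq', hdist'])
  have hsame : (⟨_, hpath⟩ : G.Path u v) = ⟨_, hpath'⟩ := (hG.subsingleton_path u v).elim _ _
  simpa using congrArg (fun p : G.Path u v => p.1.snd) hsame

theorem IsTree.dist_eq_add_one_of_adj_of_ne {u v w w₀ : V} (hG : G.IsTree) (hw : G.Adj u w)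
    (hw₀ : G.Adj u w₀) (hdist₀ : G.dist w₀ v + 1 = G.dist u v) (hne : w ≠ w₀) :
    G.dist w v = G.dist u v + 1 := by
  rcases hG.dist_eq_dist_add_one_of_adj v hw with hcloser | hfarther
  · rw [dist_comm (u := v), dist_comm (u := v)] at hcloser
    exact absurd (hG.isAcyclic.eq_of_adj_of_dist_add_one_eq hw hw₀ hcloser.symm hdist₀) hne
  · rwa [dist_comm (u := v), dist_comm (u := v)] at hfarther

theorem IsTree.sum_neighborFinset_dist {M : Type*} [AddCommMonoid M] [G.LocallyFinite]
    (hG : G.IsTree) {u v : V} (hne : u ≠ v) (f : ℕ → M) :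
    ∑ w ∈ G.neighborFinset u, f (G.dist w v) =
      f (G.dist u v - 1) + (G.degree u - 1) • f (G.dist u v + 1) := by
  classical
  obtain ⟨w₀, hw₀, hdist₀⟩ := (hG.connected u v).exists_adj_dist_add_one_eq hne
  have hmem₀ : w₀ ∈ G.neighborFinset u := (mem_neighborFinset _ _ _).mpr hw₀
  have hfarther : ∀ w ∈ (G.neighborFinset u).erase w₀, f (G.dist w v) = f (G.dist u v + 1) := by
    intro w hw
    obtain ⟨hne₀, hadj⟩ := Finset.mem_erase.mp hw
    rw [hG.dist_eq_add_one_of_adj_of_ne ((mem_neighborFinset _ _ _).mp hadj) hw₀ hdist₀ hne₀]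
  rw [← Finset.add_sum_erase _ _ hmem₀, Finset.sum_congr rfl hfarther, Finset.sum_const,
    Finset.card_erase_of_mem hmem₀, card_neighborFinset_eq_degree, ← hdist₀, Nat.add_sub_cancel]

theorem IsTree.natCard_walk_length_eq [G.LocallyFinite] (hG : G.IsTree) {d : ℕ}
    (hreg : G.IsRegularOfDegree d) (ℓ : ℕ) (u v : V) :
    Nat.card {p : G.Walk u v // p.length = ℓ} = regularTreeWalkCount d ℓ (G.dist u v) := by
  induction ℓ generalizing u v with
  | zero =>
    change Nat.card {p : G.Walk u v | p.length = 0} = _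
    obtain rfl | hne := eq_or_ne u v
    · rw [Walk.setOfPred_length_eq_zero]
      simp [regularTreeWalkCount]
    · obtain ⟨k, hk⟩ := Nat.exists_eq_add_one_of_ne_zero ((hG.connected.pos_dist_of_ne hne).ne')
      rw [Walk.setOfPred_length_eq_zero_of_ne _ hne]
      simp [hk, regularTreeWalkCount]
  | succ ℓ ih =>
    simp only [natCard_walk_length_succ, ih]
    obtain rfl | hne := eq_or_ne u v
    · have hneighbor : ∀ w ∈ G.neighborFinset u, regularTreeWalkCount d ℓ (G.dist w u) =
          regularTreeWalkCount d ℓ 1 := fun w hw => by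
        rw [dist_eq_one_iff_adj.mpr ((mem_neighborFinset _ _ _).mp hw).symm]
      rw [Finset.sum_congr rfl hneighbor, Finset.sum_const, card_neighborFinset_eq_degree, hreg u,
        dist_self, smul_eq_mul, regularTreeWalkCount]
    · obtain ⟨k, hk⟩ := Nat.exists_eq_add_one_of_ne_zero ((hG.connected.pos_dist_of_ne hne).ne')
      rw [hG.sum_neighborFinset_dist hne, hreg u, hk, smul_eq_mul, Nat.add_sub_cancel,
        regularTreeWalkCount]

end SimpleGraph

/-- On a `d`-regular tree, for a vertex `v₁` and an adjacent vertex `v₂`, and `n ≥ 1`,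
the number of closed walks of length `2n` at `v₁` equals `d` times the number of walks
of length `2n - 1` from `v₁` to `v₂`. -/
theorem stmt_5 (d : ℕ) (hd : 2 ≤ d) {V : Type*} (G : SimpleGraph V)
    [∀ w : V, Fintype (G.neighborSet w)]
    (hconn : G.Connected) (hacyc : G.IsAcyclic)
    (hreg : ∀ w : V, G.degree w = d)
    (v₁ v₂ : V) (hadj : G.Adj v₁ v₂) (n : ℕ) (hn : 1 ≤ n) :
    Nat.card {p : G.Walk v₁ v₁ // p.length = 2 * n} =
      d * Nat.card {p : G.Walk v₁ v₂ // p.length = 2 * n - 1} := by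
  have hcount := SimpleGraph.IsTree.natCard_walk_length_eq ⟨hconn, hacyc⟩ hreg
  obtain ⟨m, hm⟩ : ∃ m, 2 * n = m + 1 := ⟨2 * n - 1, by omega⟩
  rw [hm, Nat.add_sub_cancel, hcount, hcount, SimpleGraph.dist_self,
    SimpleGraph.dist_eq_one_iff_adj.mpr hadj, SimpleGraph.regularTreeWalkCount]
end

section
/- For every real number c with 0 < c < 1, ∫_{-2√c}^{2√c} ((1+c)/(2π)) · √(4c - t²)/((1+c)² - t²) dt = c. -/
/-!
With `a = 2√c`, `b = 1 + c` and `d = √(b² - a²) = 1 - c`, the function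
`arcsin (t / a) - (d / b) * arcsin (d t / (a √(b² - t²)))` is an elementary primitive of
`√(a² - t²) / (b² - t²)` on `[-a, a]` (its derivative is `(b² - t² - d²) / (√(a² - t²) (b² - t²))`,
and `b² - t² - d² = a² - t²`). Both arcsines run from `-π/2` to `π/2`, so the integral is
`π (1 - d / b)`, and the prefactor `(1 + c) / (2π)` turns this into `c`.
-/

open Real Set MeasureTheory

theorem HasDerivAt.arcsin_of_sq_lt_one {f : ℝ → ℝ} {f' x : ℝ} (hf : HasDerivAt f f' x)
    (hx : f x ^ 2 < 1) : HasDerivAt (fun y => arcsin (f y)) (1 / √(1 - f x ^ 2) * f') x := by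
  obtain ⟨hlo, hhi⟩ := abs_lt.1 ((sq_lt_one_iff_abs_lt_one _).1 hx)
  exact (hasDerivAt_arcsin hlo.ne' hhi.ne).comp x hf

section Primitive

variable {a b d t : ℝ}

theorem hasDerivAt_arcsin_div (ha : 0 < a) (ht : t ^ 2 < a ^ 2) :
    HasDerivAt (fun t => arcsin (t / a)) (1 / √(a ^ 2 - t ^ 2)) t := by
  have hsq : (t / a) ^ 2 < 1 := by rwa [div_pow, div_lt_one (by positivity)]
  have hsqrt : √(1 - (t / a) ^ 2) = √(a ^ 2 - t ^ 2) / a := by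
    rw [← sqrt_sq ha.le, ← sqrt_div' _ (sq_nonneg a), sqrt_sq ha.le]
    congr 1
    field_simp
  have := ((hasDerivAt_id' t).div_const a).arcsin_of_sq_lt_one hsq
  rw [hsqrt] at this
  convert this using 1
  field_simp

theorem hasDerivAt_arcsin_mul_div_sqrt (ha : 0 < a) (hb : 0 < b) (hd : d ^ 2 = b ^ 2 - a ^ 2)
    (ht : t ^ 2 < a ^ 2) :
    HasDerivAt (fun t => arcsin (d * t / (a * √(b ^ 2 - t ^ 2))))
      (d * b / (√(a ^ 2 - t ^ 2) * (b ^ 2 - t ^ 2))) t := by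
  have hbt : 0 < b ^ 2 - t ^ 2 := by nlinarith [sq_nonneg d]
  have hS2 : √(a ^ 2 - t ^ 2) ^ 2 = a ^ 2 - t ^ 2 := sq_sqrt (by linarith)
  have hT2 : √(b ^ 2 - t ^ 2) ^ 2 = b ^ 2 - t ^ 2 := sq_sqrt hbt.le
  have hS : 0 < √(a ^ 2 - t ^ 2) := sqrt_pos.2 (by linarith)
  have hT : 0 < √(b ^ 2 - t ^ 2) := sqrt_pos.2 hbt
  have hquot : HasDerivAt (fun t => d * t / (a * √(b ^ 2 - t ^ 2)))
      (d * b ^ 2 / (a * √(b ^ 2 - t ^ 2) ^ 3)) t := by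
    have hden := (((hasDerivAt_pow 2 t).const_sub (b ^ 2)).sqrt hbt.ne').const_mul a
    norm_num at hden
    refine (((hasDerivAt_id' t).const_mul d).fun_div hden (by positivity)).congr_deriv ?_
    field_simp
    linear_combination d * hT2
  set S := √(a ^ 2 - t ^ 2)
  set T := √(b ^ 2 - t ^ 2)
  -- `a² (b² - t²) - d² t² = b² (a² - t²)`
  have hcompl : 1 - (d * t / (a * T)) ^ 2 = (b * S / (a * T)) ^ 2 := by
    field_simp
    linear_combination (-(t ^ 2)) * hd + a ^ 2 * hT2 - b ^ 2 * hS2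
  have hsq : (d * t / (a * T)) ^ 2 < 1 := by
    have : 0 < (b * S / (a * T)) ^ 2 := by positivity
    linarith
  have := hquot.arcsin_of_sq_lt_one hsq
  rw [hcompl, sqrt_sq (by positivity)] at this
  refine this.congr_deriv ?_
  field_simp
  linear_combination (-d) * hT2

end Primitive

theorem integral_sqrt_sq_sub_sq_div_sq_sub_sq {a b : ℝ} (ha : 0 < a) (hab : a < b) :
    ∫ t in (-a)..a, √(a ^ 2 - t ^ 2) / (b ^ 2 - t ^ 2) = π * (1 - √(b ^ 2 - a ^ 2) / b) := by
  have hb : 0 < b := ha.trans hab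
  have hd2 : √(b ^ 2 - a ^ 2) ^ 2 = b ^ 2 - a ^ 2 := sq_sqrt (by nlinarith)
  have hd : 0 < √(b ^ 2 - a ^ 2) := sqrt_pos.2 (by nlinarith)
  generalize hd_def : √(b ^ 2 - a ^ 2) = d at hd2 hd ⊢
  have hbt : ∀ t ∈ Icc (-a) a, 0 < b ^ 2 - t ^ 2 := fun t ht => by
    nlinarith [sq_le_sq' ht.1 ht.2]
  have hderiv : ∀ t ∈ Ioo (-a) a, HasDerivAt
      (fun t => arcsin (t / a) - d / b * arcsin (d * t / (a * √(b ^ 2 - t ^ 2))))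
      (√(a ^ 2 - t ^ 2) / (b ^ 2 - t ^ 2)) t := fun t ht => by
    have hta : t ^ 2 < a ^ 2 := sq_lt_sq' ht.1 ht.2
    have hS2 : √(a ^ 2 - t ^ 2) ^ 2 = a ^ 2 - t ^ 2 := sq_sqrt (by linarith)
    have hS : 0 < √(a ^ 2 - t ^ 2) := sqrt_pos.2 (by linarith)
    have hbt' := hbt t ⟨ht.1.le, ht.2.le⟩
    refine ((hasDerivAt_arcsin_div ha hta).sub
      ((hasDerivAt_arcsin_mul_div_sqrt ha hb hd2 hta).const_mul (d / b))).congr_deriv ?_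
    field_simp
    linear_combination -(hd2 + hS2)
  have hcont : ContinuousOn
      (fun t => arcsin (t / a) - d / b * arcsin (d * t / (a * √(b ^ 2 - t ^ 2)))) (Icc (-a) a) := by
    fun_prop (disch := first | exact ha.ne' | (intro t ht; have := hbt t ht; positivity))
  have hint : IntervalIntegrable (fun t => √(a ^ 2 - t ^ 2) / (b ^ 2 - t ^ 2)) volume (-a) a := by
    apply ContinuousOn.intervalIntegrable
    rw [uIcc_of_le (by linarith)]
    fun_prop (disch := intro t ht; exact (hbt t ht).ne')
  rw [intervalIntegral.integral_eq_sub_of_hasDeriv_right_of_le (by linarith) hcont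
    (fun t ht => (hderiv t ht).hasDerivWithinAt) hint]
  simp only [neg_sq, neg_div, div_self ha.ne', mul_neg]
  rw [hd_def, mul_comm a, div_self (by positivity), arcsin_neg, arcsin_one]
  ring

/-- For `0 < c < 1`, the continuous part of the Kesten–McKay law has total mass `c`. -/
theorem stmt_10 (c : ℝ) (h0 : 0 < c) (h1 : c < 1) :
    ∫ t in (-(2 * Real.sqrt c))..(2 * Real.sqrt c),
        (1 + c) / (2 * Real.pi) * Real.sqrt (4 * c - t ^ 2) / ((1 + c) ^ 2 - t ^ 2) =
      c := by
  have hsq : √c ^ 2 = c := sq_sqrt h0.le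
  have ha2 : (2 * √c) ^ 2 = 4 * c := by rw [mul_pow, hsq]; norm_num
  have hs1 : √c < 1 := by simpa using sqrt_lt_sqrt h0.le h1
  have hab : 2 * √c < 1 + c := by nlinarith [mul_pos (sub_pos.2 hs1) (sub_pos.2 hs1)]
  have hd : √((1 + c) ^ 2 - (2 * √c) ^ 2) = 1 - c := by
    rw [ha2, show (1 + c) ^ 2 - 4 * c = (1 - c) ^ 2 by ring, sqrt_sq (by linarith)]
  have key := integral_sqrt_sq_sub_sq_div_sq_sub_sq (by positivity) hab
  rw [hd, ha2] at key
  simp_rw [mul_div_assoc]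
  rw [intervalIntegral.integral_const_mul, key]
  field_simp
  ring
end

section
/- Let 0 < c < 1 be real and let μ_c be the measure on ℝ given by ((1-c)/2)·δ_{-(1+c)} + ((1-c)/2)·δ_{1+c} plus the measure with density ρ_c with respect to Lebesgue measure. Then μ_c is a probability measure, and for every n ≥ 0 its 2n-th moment satisfies ∫ t^{2n} dμ_c(t) = ∑_{k=0}^{n} (binom(2n, k) - binom(2n, k-1)) · c^k, where binom(2n, -1) = 0. -/
open MeasureTheory

/-- The Kesten–McKay density `ρ_c`, extended by zero outside `[-2√c, 2√c]`. -/
noncomputable def kestenMcKayDensity (c t : ℝ) : ℝ :=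
  if |t| ≤ 2 * Real.sqrt c then
    (1 + c) / (2 * Real.pi) * Real.sqrt (4 * c - t ^ 2) / ((1 + c) ^ 2 - t ^ 2)
  else 0

/-! Substituting `t = 2√c sin φ` turns the integrals against `ρ_c` into trigonometric integrals.
Since `((1+c)² - t²) ρ_c(t) = (1+c)/(2π) · √(4c - t²)` is a multiple of the semicircle density,
whose moments are Catalan numbers, the moments `m_n = ∫ t^{2n} ρ_c` satisfy
`m_{n+1} = (1+c)² m_n - (1+c) Cat_n c^{n+1}`, while `m_0 = c` is a Poisson-kernel integral.
The atoms contribute `(1-c)(1+c)^{2n}`, so the moments of `μ_c` start at `1` and obey the same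
recursion, as does `∑_k (binom(2n,k) - binom(2n,k-1)) c^k` by Pascal's rule applied twice. -/

section Ballot

open Finset

noncomputable def ballot (m k : ℕ) : ℝ :=
  (m.choose k : ℝ) - if k = 0 then 0 else (m.choose (k - 1) : ℝ)

theorem ballot_zero_right (m : ℕ) : ballot m 0 = 1 := by
  simp [ballot]

theorem ballot_succ_succ (m k : ℕ) :
    ballot (m + 1) (k + 1) = ballot m (k + 1) + ballot m k := by
  rcases k with _ | k
  · simp [ballot]
  · simp only [ballot, Nat.add_eq_zero_iff, one_ne_zero, and_false, if_false,
      add_tsub_cancel_right, Nat.choose_succ_succ, Nat.cast_add]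
    ring

theorem ballot_two_mul_self (n : ℕ) : ballot (2 * n) n = catalan n := by
  rcases n with _ | n
  · simp [ballot]
  have hcat : ((n + 2 : ℕ) : ℝ) * catalan (n + 1) = (2 * (n + 1)).choose (n + 1) := by
    rw [← Nat.centralBinom_eq_two_mul_choose, ← succ_mul_catalan_eq_centralBinom]
    push_cast
    ring
  have hsymm :
      ((2 * (n + 1)).choose (n + 1) : ℝ) * (n + 1) = (2 * (n + 1)).choose n * (n + 2) := by
    have h := Nat.choose_succ_right_eq (2 * (n + 1)) n
    rw [show 2 * (n + 1) - n = n + 2 by omega] at h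
    exact_mod_cast h
  have hn : ((n + 2 : ℕ) : ℝ) ≠ 0 := by positivity
  apply mul_left_cancel₀ hn
  simp only [ballot, add_eq_zero, one_ne_zero, and_false, if_false, add_tsub_cancel_right]
  push_cast at hcat ⊢
  linear_combination hsymm - hcat

theorem ballot_two_mul_add_one_succ (n : ℕ) : ballot (2 * n + 1) (n + 1) = 0 := by
  simp [ballot, Nat.choose_symm_half]

theorem sum_range_succ_mul_pow_eq_one_add_mul {R : Type*} [CommRing R] {f g : ℕ → R} (x : R)
    (hg₀ : g 0 = f 0) (hg : ∀ k, g (k + 1) = f (k + 1) + f k) (N : ℕ) :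
    ∑ k ∈ range (N + 1), g k * x ^ k
      = (1 + x) * ∑ k ∈ range N, f k * x ^ k + f N * x ^ N := by
  induction N with
  | zero => simp [hg₀]
  | succ N ih => rw [sum_range_succ, ih, hg, sum_range_succ]; ring

theorem sum_ballot_two_mul_succ (x : ℝ) (n : ℕ) :
    ∑ k ∈ range (n + 2), ballot (2 * (n + 1)) k * x ^ k
      = (1 + x) ^ 2 * ∑ k ∈ range (n + 1), ballot (2 * n) k * x ^ k
        - (1 + x) * catalan n * x ^ (n + 1) := by
  have h₁ := sum_range_succ_mul_pow_eq_one_add_mul x (by simp only [ballot_zero_right])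
    (ballot_succ_succ (2 * n + 1)) (n + 1)
  have h₂ := sum_range_succ_mul_pow_eq_one_add_mul x (by simp only [ballot_zero_right])
    (ballot_succ_succ (2 * n)) n
  rw [mul_add, h₁, h₂, sum_range_succ, ballot_two_mul_add_one_succ, ballot_two_mul_self]
  ring

end Ballot

open Real Set intervalIntegral Function

section Trigonometric

theorem integral_sin_pow_two_mul (n : ℕ) :
    ∫ φ in -(π / 2)..π / 2, sin φ ^ (2 * n) = π * n.centralBinom / 4 ^ n := by
  induction n with
  | zero => simp
  | succ n ih =>
    have hcb : ((n : ℝ) + 1) * (n + 1).centralBinom = 2 * (2 * n + 1) * n.centralBinom := by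
      exact_mod_cast Nat.succ_mul_centralBinom_succ n
    rw [mul_add, integral_sin_pow, ih, cos_neg, cos_pi_div_two, pow_succ]
    field_simp
    push_cast
    linear_combination (-2 * π * 4 ^ n) * hcb

theorem integral_sin_pow_mul_cos_sq (n : ℕ) :
    ∫ φ in -(π / 2)..π / 2, sin φ ^ (2 * n) * cos φ ^ 2 = π * catalan n / (2 * 4 ^ n) := by
  have h : ∀ φ, sin φ ^ (2 * n) * cos φ ^ 2 = sin φ ^ (2 * n) - sin φ ^ (2 * n + 2) := by
    intro φ; rw [cos_sq', pow_add]; ring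
  have hcat : ((n : ℝ) + 1) * catalan n = n.centralBinom := by
    exact_mod_cast succ_mul_catalan_eq_centralBinom n
  simp_rw [h]
  rw [intervalIntegral.integral_sub (by apply Continuous.intervalIntegrable; fun_prop)
    (by apply Continuous.intervalIntegrable; fun_prop), integral_sin_pow, cos_neg, cos_pi_div_two,
    integral_sin_pow_two_mul, ← hcat]
  field_simp
  push_cast
  ring

theorem integral_eq_integral_mul_sin {r : ℝ} (hr : 0 ≤ r) {f : ℝ → ℝ}
    (hf : ContinuousOn f (Icc (-r) r)) :
    ∫ t in -r..r, f t = ∫ φ in -(π / 2)..π / 2, f (r * sin φ) * (r * cos φ) := by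
  have hsub := integral_comp_mul_deriv' (a := -(π / 2)) (b := π / 2) (f := fun φ => r * sin φ)
    (g := f) (fun φ _ => (hasDerivAt_sin φ).const_mul r) (by fun_prop) (hf.mono ?_)
  · simpa using hsub.symm
  · rintro _ ⟨φ, -, rfl⟩
    constructor <;> nlinarith [neg_one_le_sin φ, sin_le_one φ]

theorem sqrt_sq_sub_sq_mul_sin {r φ : ℝ} (hr : 0 ≤ r) (hφ : φ ∈ uIcc (-(π / 2)) (π / 2)) :
    √(r ^ 2 - (r * sin φ) ^ 2) = r * cos φ := by
  rw [uIcc_of_le (by linarith [pi_pos])] at hφ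
  rw [show r ^ 2 - (r * sin φ) ^ 2 = (r * cos φ) ^ 2 by
      linear_combination (-r ^ 2) * sin_sq_add_cos_sq φ,
    sqrt_sq (mul_nonneg hr (cos_nonneg_of_mem_Icc hφ))]

theorem integral_pow_mul_sqrt_sq_sub_sq {r : ℝ} (hr : 0 ≤ r) (n : ℕ) :
    ∫ t in -r..r, t ^ (2 * n) * √(r ^ 2 - t ^ 2)
      = 2 * π * catalan n * (r ^ 2 / 4) ^ (n + 1) := by
  rw [integral_eq_integral_mul_sin hr (by fun_prop),
    integral_congr (g := fun φ => r ^ (2 * n + 2) * (sin φ ^ (2 * n) * cos φ ^ 2)),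
    intervalIntegral.integral_const_mul, integral_sin_pow_mul_cos_sq]
  · rw [div_pow, ← pow_mul]
    field_simp
    ring
  · intro φ hφ
    simp only
    rw [sqrt_sq_sub_sq_mul_sin hr hφ]
    ring

theorem one_add_mul_cos_pos {c : ℝ} (hc : |c| < 1) (θ : ℝ) : 0 < 1 + c * cos θ := by
  have := abs_mul c (cos θ) ▸ mul_le_of_le_one_right (abs_nonneg c) (abs_cos_le_one θ)
  linarith [neg_abs_le (c * cos θ)]

theorem one_add_two_mul_mul_cos_add_sq_pos {c : ℝ} (hc : |c| < 1) (θ : ℝ) :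
    0 < 1 + 2 * c * cos θ + c ^ 2 := by
  nlinarith [one_add_mul_cos_pos hc θ, sq_nonneg (c * sin θ), sin_sq_add_cos_sq θ]

theorem hasDerivAt_poissonKernel_primitive {c : ℝ} (hc : |c| < 1) (θ : ℝ) :
    HasDerivAt (fun θ => θ - 2 * arctan (c * sin θ / (1 + c * cos θ)))
      ((1 - c ^ 2) / (1 + 2 * c * cos θ + c ^ 2)) θ := by
  have hq := ((hasDerivAt_sin θ).const_mul c).fun_div
    (((hasDerivAt_cos θ).const_mul c).const_add 1) (one_add_mul_cos_pos hc θ).ne'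
  refine ((hasDerivAt_id' θ).sub (hq.arctan.const_mul 2)).congr_deriv ?_
  have := one_add_mul_cos_pos hc θ
  have := one_add_two_mul_mul_cos_add_sq_pos hc θ
  field_simp
  linear_combination (-2 * c ^ 2 - 2 * c ^ 3 * cos θ) * sin_sq_add_cos_sq θ

theorem integral_poissonKernel {c : ℝ} (hc : |c| < 1) :
    ∫ θ in -π..π, (1 - c ^ 2) / (1 + 2 * c * cos θ + c ^ 2) = 2 * π := by
  rw [integral_eq_sub_of_hasDerivAt (fun θ _ => hasDerivAt_poissonKernel_primitive hc θ)]
  · simp only [sin_pi, mul_zero, cos_pi, mul_neg, mul_one, zero_div, arctan_zero, sub_zero,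
      sin_neg, neg_zero, cos_neg, sub_neg_eq_add]
    ring
  · exact (continuous_const.div (by fun_prop)
      (fun θ => (one_add_two_mul_mul_cos_add_sq_pos hc θ).ne')).intervalIntegrable _ _

end Trigonometric

section KestenMcKay

variable {c : ℝ}

theorem two_mul_sqrt_sq (hc : 0 ≤ c) : (2 * √c) ^ 2 = 4 * c := by
  rw [mul_pow, sq_sqrt hc]
  norm_num

theorem abs_le_two_mul_sqrt_iff (hc : 0 ≤ c) {t : ℝ} : |t| ≤ 2 * √c ↔ t ^ 2 ≤ 4 * c := by
  rw [← sq_le_sq₀ (abs_nonneg t) (by positivity), sq_abs, two_mul_sqrt_sq hc]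

theorem one_add_sq_sub_sq_pos (hc1 : c ≠ 1) {t : ℝ} (ht : t ^ 2 ≤ 4 * c) :
    0 < (1 + c) ^ 2 - t ^ 2 := by
  nlinarith [sq_pos_of_ne_zero (sub_ne_zero.mpr hc1)]

theorem kestenMcKayDensity_eq (hc : 0 ≤ c) (t : ℝ) :
    kestenMcKayDensity c t = (1 + c) / (2 * π) * √(4 * c - t ^ 2) / ((1 + c) ^ 2 - t ^ 2) := by
  unfold kestenMcKayDensity
  split_ifs with ht
  · rfl
  · -- outside the support `√(4c - t²)` takes the junk value `0`, so the `if` is redundant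
    rw [abs_le_two_mul_sqrt_iff hc, not_le] at ht
    rw [sqrt_eq_zero'.mpr (by linarith)]
    simp

theorem support_kestenMcKayDensity_subset (c : ℝ) :
    support (kestenMcKayDensity c) ⊆ Icc (-(2 * √c)) (2 * √c) := by
  intro t ht
  by_contra h
  exact ht (if_neg (by rwa [abs_le]))

theorem kestenMcKayDensity_nonneg (hc0 : 0 ≤ c) (hc1 : c ≠ 1) (t : ℝ) :
    0 ≤ kestenMcKayDensity c t := by
  unfold kestenMcKayDensity
  split_ifs with ht
  · have := one_add_sq_sub_sq_pos hc1 ((abs_le_two_mul_sqrt_iff hc0).mp ht)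
    positivity
  · rfl

theorem measurable_kestenMcKayDensity (c : ℝ) : Measurable (kestenMcKayDensity c) := by
  unfold kestenMcKayDensity
  exact Measurable.ite (measurableSet_le (by fun_prop) (by fun_prop)) (by fun_prop) (by fun_prop)

theorem continuousOn_kestenMcKayDensity (hc0 : 0 ≤ c) (hc1 : c ≠ 1) :
    ContinuousOn (kestenMcKayDensity c) (Icc (-(2 * √c)) (2 * √c)) := by
  rw [funext (kestenMcKayDensity_eq hc0)]
  refine ContinuousOn.div (by fun_prop) (by fun_prop) fun t ht => ?_
  exact (one_add_sq_sub_sq_pos hc1 ((abs_le_two_mul_sqrt_iff hc0).mp (abs_le.mpr ht))).ne'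

theorem sub_sq_mul_kestenMcKayDensity (hc0 : 0 ≤ c) (hc1 : c ≠ 1) (t : ℝ) :
    ((1 + c) ^ 2 - t ^ 2) * kestenMcKayDensity c t = (1 + c) / (2 * π) * √(4 * c - t ^ 2) := by
  rw [kestenMcKayDensity_eq hc0]
  rcases le_or_gt (t ^ 2) (4 * c) with ht | ht
  · have := one_add_sq_sub_sq_pos hc1 ht
    field_simp
  · rw [sqrt_eq_zero'.mpr (by linarith)]
    simp

theorem integral_mul_kestenMcKayDensity (c : ℝ) (f : ℝ → ℝ) :
    ∫ t, f t * kestenMcKayDensity c t = ∫ t in -(2 * √c)..2 * √c, f t * kestenMcKayDensity c t := by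
  rw [integral_of_le (neg_le_self (by positivity)), ← integral_Icc_eq_integral_Ioc,
    setIntegral_eq_integral_of_forall_compl_eq_zero]
  intro t ht
  rw [notMem_support.mp fun h => ht (support_kestenMcKayDensity_subset c h), mul_zero]

theorem integrable_mul_kestenMcKayDensity (hc0 : 0 ≤ c) (hc1 : c ≠ 1) {f : ℝ → ℝ}
    (hf : Continuous f) : Integrable fun t => f t * kestenMcKayDensity c t := by
  rw [← integrableOn_iff_integrable_of_support_subset
    ((support_mul_subset_right _ _).trans (support_kestenMcKayDensity_subset c))]
  exact (hf.continuousOn.mul (continuousOn_kestenMcKayDensity hc0 hc1)).integrableOn_Icc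

-- `4c cos²φ = D - (1 - c)²` with `D = (1 + c)² - 4c sin²φ = 1 + 2c cos 2φ + c²`
theorem kestenMcKayDensity_two_mul_sqrt_mul_sin_mul (hc0 : 0 ≤ c) (hc : |c| < 1) {φ : ℝ}
    (hφ : φ ∈ uIcc (-(π / 2)) (π / 2)) :
    kestenMcKayDensity c (2 * √c * sin φ) * (2 * √c * cos φ)
      = (1 + c) / (2 * π)
        * (1 - (1 - c) / (1 + c) * ((1 - c ^ 2) / (1 + 2 * c * cos (2 * φ) + c ^ 2))) := by
  have hsq := two_mul_sqrt_sq hc0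
  have hD : (1 + c) ^ 2 - (2 * √c * sin φ) ^ 2 = 1 + 2 * c * cos (2 * φ) + c ^ 2 := by
    rw [mul_pow, hsq, cos_two_mul]
    linear_combination (-4 * c) * sin_sq_add_cos_sq φ
  have := one_add_two_mul_mul_cos_add_sq_pos hc (2 * φ)
  rw [kestenMcKayDensity_eq hc0, ← hsq, sqrt_sq_sub_sq_mul_sin (by positivity) hφ, hD]
  field_simp
  rw [eq_sub_iff_add_eq, ← add_div, div_eq_iff (by linarith), cos_two_mul, sq_sqrt hc0]
  ring

theorem integral_kestenMcKayDensity (hc0 : 0 ≤ c) (hc1 : c < 1) :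
    ∫ t, kestenMcKayDensity c t = c := by
  have hc : |c| < 1 := abs_lt.mpr ⟨by linarith, hc1⟩
  have h := integral_mul_kestenMcKayDensity c fun _ => 1
  simp only [one_mul] at h
  rw [h, integral_eq_integral_mul_sin (by positivity) (continuousOn_kestenMcKayDensity hc0 hc1.ne),
    integral_congr fun φ hφ => kestenMcKayDensity_two_mul_sqrt_mul_sin_mul hc0 hc hφ,
    intervalIntegral.integral_const_mul,
    intervalIntegral.integral_sub intervalIntegrable_const (by
      apply Continuous.intervalIntegrable
      exact continuous_const.mul (continuous_const.div (by fun_prop)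
        fun φ => (one_add_two_mul_mul_cos_add_sq_pos hc (2 * φ)).ne')),
    intervalIntegral.integral_const, intervalIntegral.integral_const_mul,
    intervalIntegral.integral_comp_mul_left (fun θ => (1 - c ^ 2) / (1 + 2 * c * cos θ + c ^ 2))
      two_ne_zero, show 2 * -(π / 2) = -π by ring, show 2 * (π / 2) = π by ring,
    integral_poissonKernel hc]
  field_simp
  ring

theorem integral_pow_succ_mul_kestenMcKayDensity (hc0 : 0 ≤ c) (hc1 : c ≠ 1) (n : ℕ) :
    ∫ t, t ^ (2 * (n + 1)) * kestenMcKayDensity c t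
      = (1 + c) ^ 2 * (∫ t, t ^ (2 * n) * kestenMcKayDensity c t)
        - (1 + c) * catalan n * c ^ (n + 1) := by
  have hsq := two_mul_sqrt_sq hc0
  have key : ∀ t, t ^ (2 * (n + 1)) * kestenMcKayDensity c t
      = (1 + c) ^ 2 * (t ^ (2 * n) * kestenMcKayDensity c t)
        - (1 + c) / (2 * π) * (t ^ (2 * n) * √((2 * √c) ^ 2 - t ^ 2)) := by
    intro t
    rw [hsq]
    linear_combination (-t ^ (2 * n)) * sub_sq_mul_kestenMcKayDensity hc0 hc1 t
  have hint : IntervalIntegrable (fun t => t ^ (2 * n) * kestenMcKayDensity c t) volume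
      (-(2 * √c)) (2 * √c) := by
    refine ContinuousOn.intervalIntegrable ?_
    rw [uIcc_of_le (neg_le_self (by positivity))]
    exact (continuousOn_pow _).mul (continuousOn_kestenMcKayDensity hc0 hc1)
  simp only [integral_mul_kestenMcKayDensity c]
  rw [integral_congr fun t _ => key t,
    intervalIntegral.integral_sub (hint.const_mul _)
      (by apply Continuous.intervalIntegrable; fun_prop),
    intervalIntegral.integral_const_mul, intervalIntegral.integral_const_mul,
    integral_pow_mul_sqrt_sq_sub_sq (by positivity), hsq, mul_div_cancel_left₀ c four_ne_zero]
  field_simp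

noncomputable def kestenMcKayMeasure (c : ℝ) : Measure ℝ :=
  ENNReal.ofReal ((1 - c) / 2) • Measure.dirac (-(1 + c))
    + volume.withDensity (fun t => ENNReal.ofReal (kestenMcKayDensity c t))
    + ENNReal.ofReal ((1 - c) / 2) • Measure.dirac (1 + c)

theorem isProbabilityMeasure_kestenMcKayMeasure (hc0 : 0 ≤ c) (hc1 : c < 1) :
    IsProbabilityMeasure (kestenMcKayMeasure c) := by
  have hρ : ∫⁻ t, ENNReal.ofReal (kestenMcKayDensity c t) = ENNReal.ofReal c := by
    have hint := integrable_mul_kestenMcKayDensity hc0 hc1.ne (f := fun _ => 1) continuous_const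
    simp only [one_mul] at hint
    rw [← ofReal_integral_eq_lintegral_ofReal hint
      (ae_of_all _ (kestenMcKayDensity_nonneg hc0 hc1.ne)), integral_kestenMcKayDensity hc0 hc1]
  rw [isProbabilityMeasure_iff]
  simp only [kestenMcKayMeasure, Measure.add_apply, Measure.smul_apply,
    withDensity_apply _ MeasurableSet.univ, Measure.restrict_univ, hρ, measure_univ, smul_eq_mul,
    mul_one]
  rw [← ENNReal.ofReal_add (by linarith) hc0, ← ENNReal.ofReal_add (by linarith) (by linarith),
    show (1 - c) / 2 + c + (1 - c) / 2 = 1 by ring, ENNReal.ofReal_one]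

theorem integral_kestenMcKayMeasure (hc0 : 0 ≤ c) (hc1 : c < 1) {f : ℝ → ℝ}
    (hf : Continuous f) :
    ∫ t, f t ∂kestenMcKayMeasure c
      = (1 - c) / 2 * f (-(1 + c)) + (∫ t, f t * kestenMcKayDensity c t)
        + (1 - c) / 2 * f (1 + c) := by
  have hρ : Measurable fun t => ENNReal.ofReal (kestenMcKayDensity c t) :=
    (measurable_kestenMcKayDensity c).ennreal_ofReal
  have hfin : ∀ᵐ t, ENNReal.ofReal (kestenMcKayDensity c t) < ⊤ :=
    ae_of_all _ fun _ => ENNReal.ofReal_lt_top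
  have hsmul : ∀ t, (ENNReal.ofReal (kestenMcKayDensity c t)).toReal • f t
      = f t * kestenMcKayDensity c t := fun t => by
    rw [ENNReal.toReal_ofReal (kestenMcKayDensity_nonneg hc0 hc1.ne t), smul_eq_mul, mul_comm]
  have hdens :
      Integrable f (volume.withDensity fun t => ENNReal.ofReal (kestenMcKayDensity c t)) := by
    rw [integrable_withDensity_iff_integrable_smul' hρ hfin]
    simpa only [hsmul] using integrable_mul_kestenMcKayDensity hc0 hc1.ne hf
  have hdirac : ∀ a, Integrable f (ENNReal.ofReal ((1 - c) / 2) • Measure.dirac a) := fun a =>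
    (integrable_dirac enorm_lt_top).smul_measure ENNReal.ofReal_ne_top
  rw [kestenMcKayMeasure, integral_add_measure ((hdirac _).add_measure hdens) (hdirac _),
    integral_add_measure (hdirac _) hdens, MeasureTheory.integral_smul_measure,
    MeasureTheory.integral_smul_measure, integral_dirac, integral_dirac,
    ENNReal.toReal_ofReal (by linarith),
    integral_withDensity_eq_integral_toReal_smul hρ hfin]
  simp only [hsmul, smul_eq_mul]

theorem integral_pow_two_mul_kestenMcKayMeasure (hc0 : 0 ≤ c) (hc1 : c < 1) (n : ℕ) :
    ∫ t, t ^ (2 * n) ∂kestenMcKayMeasure c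
      = (1 - c) * (1 + c) ^ (2 * n) + ∫ t, t ^ (2 * n) * kestenMcKayDensity c t := by
  rw [integral_kestenMcKayMeasure hc0 hc1 (continuous_pow _), Even.neg_pow (even_two_mul n)]
  ring

theorem integral_pow_two_mul_kestenMcKayMeasure_eq_sum_ballot (hc0 : 0 ≤ c) (hc1 : c < 1)
    (n : ℕ) :
    ∫ t, t ^ (2 * n) ∂kestenMcKayMeasure c
      = ∑ k ∈ Finset.range (n + 1), ballot (2 * n) k * c ^ k := by
  induction n with
  | zero =>
    rw [integral_pow_two_mul_kestenMcKayMeasure hc0 hc1]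
    simp [integral_kestenMcKayDensity hc0 hc1, ballot_zero_right]
  | succ n ih =>
    rw [integral_pow_two_mul_kestenMcKayMeasure hc0 hc1] at ih ⊢
    rw [sum_ballot_two_mul_succ, ← ih, integral_pow_succ_mul_kestenMcKayDensity hc0 hc1.ne]
    ring

end KestenMcKay

/-- For `0 < c < 1`, the Kesten–McKay law
`μ_c = ((1-c)/2)·δ_{-(1+c)} + ρ_c(t)dt + ((1-c)/2)·δ_{1+c}` is a probability measure
whose `2n`-th moments are `∑_{k=0}^{n} (binom(2n,k) - binom(2n,k-1)) c^k`, with the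
convention `binom(2n,-1) = 0`. -/
theorem stmt_11 (c : ℝ) (h0 : 0 < c) (h1 : c < 1) (μ : Measure ℝ)
    (hμ : μ = ENNReal.ofReal ((1 - c) / 2) • Measure.dirac (-(1 + c))
        + volume.withDensity (fun t => ENNReal.ofReal (kestenMcKayDensity c t))
        + ENNReal.ofReal ((1 - c) / 2) • Measure.dirac (1 + c)) :
    IsProbabilityMeasure μ ∧
      ∀ n : ℕ,
        ∫ t, t ^ (2 * n) ∂μ =
          ∑ k ∈ Finset.range (n + 1),
            (((2 * n).choose k : ℝ) -
                if k = 0 then 0 else ((2 * n).choose (k - 1) : ℝ)) * c ^ k := by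
  subst hμ
  exact ⟨isProbabilityMeasure_kestenMcKayMeasure h0.le h1,
    integral_pow_two_mul_kestenMcKayMeasure_eq_sum_ballot h0.le h1⟩
end
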